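/- Let k ∈ ℝ, let w_A, w_B : ℝ → ℂ be C^∞ functions with w_A(x) + w_B(x) = x + k, let s_A, s_B be antiderivatives of w_A, w_B with s_A(x) + s_B(x) = x²/2 + kx, and set φ₀(x) = N_φ e^{−s_A(x)}, Ψ₀(x) = N_Ψ e^{−conj(s_B(x))}, φ_n = (1/√(n!)) Bⁿ φ₀, Ψ_n = (1/√(n!)) (A†)ⁿ Ψ₀, with (Af)(x) = f'(x) + w_A(x) f(x), (Bf)(x) = −f'(x) + w_B(x) f(x), (A†f)(x) = −f'(x) + conj(w_A(x)) f(x), (B†f)(x) = f'(x) + conj(w_B(x)) f(x). Then Aφ₀ = 0 and B†Ψ₀ = 0 identically, and for every n ≥ 1 the lowering relations (Aφ_n)(x) = √n·φ_{n−1}(x) and (B†Ψ_n)(x) = √n·Ψ_{n−1}(x) hold for all x ∈ ℝ. -/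

import Mathlib

noncomputable section
open scoped ContDiff

/-- The pseudo-bosonic lowering operator `A = d/dx + w_A`. -/
def opA (wA : ℝ → ℂ) (f : ℝ → ℂ) : ℝ → ℂ :=
  fun x => deriv f x + wA x * f x

/-- The pseudo-bosonic raising operator `B = -d/dx + w_B`. -/
def opB (wB : ℝ → ℂ) (f : ℝ → ℂ) : ℝ → ℂ :=
  fun x => -deriv f x + wB x * f x

/-- The pseudo-bosonic raising operator `A† = -d/dx + conj w_A`. -/
def opAdag (wA : ℝ → ℂ) (f : ℝ → ℂ) : ℝ → ℂ :=
  fun x => -deriv f x + (starRingEnd ℂ) (wA x) * f x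

/-- The pseudo-bosonic lowering operator `B† = d/dx + conj w_B`. -/
def opBdag (wB : ℝ → ℂ) (f : ℝ → ℂ) : ℝ → ℂ :=
  fun x => deriv f x + (starRingEnd ℂ) (wB x) * f x

/-- `φ_n = (1/√n!) Bⁿ φ₀` with `φ₀ = N_φ e^{-s_A}`. -/
def pbPhi (wB sA : ℝ → ℂ) (Nφ : ℂ) (n : ℕ) : ℝ → ℂ :=
  fun x => (1 / (Real.sqrt n.factorial : ℂ)) *
    ((opB wB)^[n] (fun t => Nφ * Complex.exp (-sA t)) x)

/-- `Ψ_n = (1/√n!) (A†)ⁿ Ψ₀` with `Ψ₀ = N_Ψ e^{-conj s_B}`. -/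
def pbPsi (wA sB : ℝ → ℂ) (NΨ : ℂ) (n : ℕ) : ℝ → ℂ :=
  fun x => (1 / (Real.sqrt n.factorial : ℂ)) *
    ((opAdag wA)^[n] (fun t => NΨ * Complex.exp (-(starRingEnd ℂ) (sB t))) x)

lemma opA_const_mul {wA f : ℝ → ℂ} (hf : Differentiable ℝ f) (c : ℂ) (x : ℝ) :
    opA wA (fun t => c * f t) x = c * opA wA f x := by
  simp only [opA]
  rw [deriv_const_mul c (hf x)]
  ring

lemma opB_const_mul {wB f : ℝ → ℂ} (hf : Differentiable ℝ f) (c : ℂ) (x : ℝ) :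
    opB wB (fun t => c * f t) x = c * opB wB f x := by
  simp only [opB]
  rw [deriv_const_mul c (hf x)]
  ring

lemma contDiff_opB {wB : ℝ → ℂ} (hwB : ContDiff ℝ ∞ wB) {f : ℝ → ℂ}
    (hf : ContDiff ℝ ∞ f) : ContDiff ℝ ∞ (opB wB f) :=
  ((contDiff_infty_iff_deriv.mp hf).2.neg).add (hwB.mul hf)

lemma contDiff_opB_iter {wB : ℝ → ℂ} (hwB : ContDiff ℝ ∞ wB) {f : ℝ → ℂ}
    (hf : ContDiff ℝ ∞ f) (n : ℕ) : ContDiff ℝ ∞ ((opB wB)^[n] f) := by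
  induction n with
  | zero => exact hf
  | succ n ih => rw [Function.iterate_succ_apply']; exact contDiff_opB hwB ih

lemma comm_opA_opB {wA wB : ℝ → ℂ} (hwA : ContDiff ℝ ∞ wA) (hwB : ContDiff ℝ ∞ wB)
    (hw1 : ∀ x, deriv wA x + deriv wB x = 1) {f : ℝ → ℂ} (hf : ContDiff ℝ ∞ f) (x : ℝ) :
    opA wA (opB wB f) x = opB wB (opA wA f) x + f x := by
  have hf1 : Differentiable ℝ f := hf.differentiable (by simp)
  have hf2 : ContDiff ℝ ∞ (deriv f) := (contDiff_infty_iff_deriv.mp hf).2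
  have h1 : HasDerivAt (fun t => deriv f t) (deriv (deriv f) x) x :=
    (hf2.differentiable (by simp) x).hasDerivAt
  have h3 : HasDerivAt f (deriv f x) x := (hf1 x).hasDerivAt
  have hdB : HasDerivAt (opB wB f)
      (-(deriv (deriv f) x) + (deriv wB x * f x + wB x * deriv f x)) x :=
    h1.neg.add (((hwB.differentiable (by simp) x).hasDerivAt).mul h3)
  have hdA : HasDerivAt (opA wA f)
      (deriv (deriv f) x + (deriv wA x * f x + wA x * deriv f x)) x :=
    h1.add (((hwA.differentiable (by simp) x).hasDerivAt).mul h3)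
  have e1 : opA wA (opB wB f) x = deriv (opB wB f) x + wA x * opB wB f x := rfl
  have e2 : opB wB (opA wA f) x = -deriv (opA wA f) x + wB x * opA wA f x := rfl
  rw [e1, e2, hdB.deriv, hdA.deriv]
  simp only [opA, opB]
  linear_combination f x * hw1 x

lemma lowering {wA wB : ℝ → ℂ} (hwA : ContDiff ℝ ∞ wA) (hwB : ContDiff ℝ ∞ wB)
    (hw1 : ∀ x, deriv wA x + deriv wB x = 1) {f : ℝ → ℂ} (hf : ContDiff ℝ ∞ f)
    (hAf : ∀ x, opA wA f x = 0) :
    ∀ n : ℕ, ∀ x : ℝ,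
      opA wA ((opB wB)^[n + 1] f) x = ((n : ℂ) + 1) * (opB wB)^[n] f x := by
  intro n
  induction n with
  | zero =>
    intro x
    have h := comm_opA_opB hwA hwB hw1 hf x
    have hAf' : opA wA f = fun _ => 0 := funext hAf
    simp only [zero_add, Function.iterate_one, Function.iterate_zero, id]
    rw [h, hAf']
    simp [opB]
  | succ m ih =>
    intro x
    rw [Function.iterate_succ_apply' (opB wB) (m + 1)]
    rw [comm_opA_opB hwA hwB hw1 (contDiff_opB_iter hwB hf (m + 1)) x]
    have h2 : opA wA ((opB wB)^[m + 1] f) = fun t => ((m : ℂ) + 1) * (opB wB)^[m] f t :=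
      funext ih
    rw [h2, opB_const_mul ((contDiff_opB_iter hwB hf m).differentiable (by simp)) _ x,
      ← Function.iterate_succ_apply' (opB wB) m]
    push_cast
    ring

lemma main_phi {wA wB sA : ℝ → ℂ} (Nφ : ℂ) (hwA : ContDiff ℝ ∞ wA)
    (hwB : ContDiff ℝ ∞ wB) (hw1 : ∀ x, deriv wA x + deriv wB x = 1)
    (hsA : ∀ x : ℝ, HasDerivAt sA (wA x) x) :
    (∀ x : ℝ, opA wA (pbPhi wB sA Nφ 0) x = 0) ∧
    (∀ n : ℕ, 1 ≤ n → ∀ x : ℝ,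
      opA wA (pbPhi wB sA Nφ n) x = (Real.sqrt n : ℂ) * pbPhi wB sA Nφ (n - 1) x) := by
  set φ₀ : ℝ → ℂ := fun t => Nφ * Complex.exp (-sA t) with hφ₀
  have hsAsm : ContDiff ℝ ∞ sA := by
    rw [contDiff_infty_iff_deriv]
    refine ⟨fun x => (hsA x).differentiableAt, ?_⟩
    have : deriv sA = wA := funext fun x => (hsA x).deriv
    rw [this]; exact hwA
  have hφsm : ContDiff ℝ ∞ φ₀ :=
    contDiff_const.mul (Complex.contDiff_exp.comp hsAsm.neg)
  have hAφ : ∀ x, opA wA φ₀ x = 0 := by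
    intro x
    have hd : HasDerivAt φ₀ (Nφ * (Complex.exp (-sA x) * -wA x)) x :=
      (((hsA x).neg).cexp).const_mul Nφ
    show deriv φ₀ x + wA x * φ₀ x = 0
    rw [hd.deriv, hφ₀]
    ring
  constructor
  · intro x
    have : pbPhi wB sA Nφ 0 = fun t => (1 : ℂ) * φ₀ t := by
      funext t
      simp [pbPhi, hφ₀]
    rw [this, opA_const_mul (hφsm.differentiable (by simp)) 1 x, hAφ x, mul_zero]
  · intro n hn x
    obtain ⟨m, rfl⟩ : ∃ m, n = m + 1 := ⟨n - 1, (Nat.succ_pred_eq_of_pos hn).symm⟩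
    have hrw : pbPhi wB sA Nφ (m + 1) =
        fun t => (1 / (Real.sqrt (m + 1).factorial : ℂ)) * (opB wB)^[m + 1] φ₀ t := by
      funext t; rw [pbPhi, ← hφ₀]
    rw [hrw, opA_const_mul ((contDiff_opB_iter hwB hφsm (m + 1)).differentiable (by simp)) _ x,
      lowering hwA hwB hw1 hφsm hAφ m x]
    have hrw2 : pbPhi wB sA Nφ (m + 1 - 1) x =
        (1 / (Real.sqrt m.factorial : ℂ)) * (opB wB)^[m] φ₀ x := by
      rw [Nat.add_sub_cancel, pbPhi, ← hφ₀]
    rw [hrw2]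
    have hfac : Real.sqrt ((m + 1).factorial : ℕ) =
        Real.sqrt ((m : ℝ) + 1) * Real.sqrt (m.factorial : ℕ) := by
      rw [Nat.factorial_succ, Nat.cast_mul, Real.sqrt_mul (by positivity)]
      norm_num
    have hms : Real.sqrt ((m : ℝ) + 1) * Real.sqrt ((m : ℝ) + 1) = (m : ℝ) + 1 :=
      Real.mul_self_sqrt (by positivity)
    have h0 : Real.sqrt ((m.factorial : ℕ) : ℝ) ≠ 0 := by positivity
    have h1 : Real.sqrt ((m : ℝ) + 1) ≠ 0 := by positivity
    have key : (1 / (Real.sqrt ((m + 1).factorial : ℕ) : ℂ)) * ((m : ℂ) + 1) =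
        (Real.sqrt ((m : ℕ) + 1 : ℕ) : ℂ) * (1 / (Real.sqrt (m.factorial : ℕ) : ℂ)) := by
      have hfacC : (Real.sqrt ((m + 1).factorial : ℕ) : ℂ) =
          (Real.sqrt ((m : ℝ) + 1) : ℂ) * (Real.sqrt ((m.factorial : ℕ) : ℝ) : ℂ) := by
        exact_mod_cast congrArg (Complex.ofReal) hfac
      have hmsC : (Real.sqrt ((m : ℝ) + 1) : ℂ) * (Real.sqrt ((m : ℝ) + 1) : ℂ) =
          (m : ℂ) + 1 := by exact_mod_cast congrArg (Complex.ofReal) hms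
      have hcast : ((Real.sqrt ((m : ℕ) + 1 : ℕ) : ℝ) : ℂ) =
          (Real.sqrt ((m : ℝ) + 1) : ℂ) := by push_cast; ring_nf
      rw [hfacC, hcast]
      have h0C : (Real.sqrt ((m.factorial : ℕ) : ℝ) : ℂ) ≠ 0 := by
        exact_mod_cast h0
      have h1C : (Real.sqrt ((m : ℝ) + 1) : ℂ) ≠ 0 := by exact_mod_cast h1
      field_simp
      linear_combination (-1 : ℂ) * hmsC
    calc (1 / (Real.sqrt ((m + 1).factorial : ℕ) : ℂ)) * (((m : ℂ) + 1) * (opB wB)^[m] φ₀ x)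
        = ((1 / (Real.sqrt ((m + 1).factorial : ℕ) : ℂ)) * ((m : ℂ) + 1)) *
            (opB wB)^[m] φ₀ x := by ring
      _ = ((Real.sqrt ((m : ℕ) + 1 : ℕ) : ℂ) * (1 / (Real.sqrt (m.factorial : ℕ) : ℂ))) *
            (opB wB)^[m] φ₀ x := by rw [key]
      _ = (Real.sqrt ((m : ℕ) + 1 : ℕ) : ℂ) *
            ((1 / (Real.sqrt (m.factorial : ℕ) : ℂ)) * (opB wB)^[m] φ₀ x) := by ring

theorem stmt8 (k : ℝ) (wA wB sA sB : ℝ → ℂ) (Nφ NΨ : ℂ)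
    (hwA : ContDiff ℝ (⊤ : ℕ∞) wA) (hwB : ContDiff ℝ (⊤ : ℕ∞) wB)
    (hsum : ∀ x : ℝ, wA x + wB x = (x : ℂ) + (k : ℂ))
    (hsA : ∀ x : ℝ, HasDerivAt sA (wA x) x)
    (hsB : ∀ x : ℝ, HasDerivAt sB (wB x) x)
    (hnorm : ∀ x : ℝ, sA x + sB x = (x : ℂ) ^ 2 / 2 + (k : ℂ) * (x : ℂ))
    (hNφ : Nφ ≠ 0) (hNΨ : NΨ ≠ 0) :
    (∀ x : ℝ, opA wA (pbPhi wB sA Nφ 0) x = 0) ∧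
    (∀ x : ℝ, opBdag wB (pbPsi wA sB NΨ 0) x = 0) ∧
    (∀ n : ℕ, 1 ≤ n → ∀ x : ℝ,
      opA wA (pbPhi wB sA Nφ n) x
        = (Real.sqrt n : ℂ) * pbPhi wB sA Nφ (n - 1) x) ∧
    (∀ n : ℕ, 1 ≤ n → ∀ x : ℝ,
      opBdag wB (pbPsi wA sB NΨ n) x
        = (Real.sqrt n : ℂ) * pbPsi wA sB NΨ (n - 1) x) := by
  have hw1 : ∀ x : ℝ, deriv wA x + deriv wB x = 1 := by
    intro x
    have hA : HasDerivAt (fun x : ℝ => wA x + wB x) (deriv wA x + deriv wB x) x :=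
      ((hwA.differentiable (by simp) x).hasDerivAt).add ((hwB.differentiable (by simp) x).hasDerivAt)
    have hB : HasDerivAt (fun x : ℝ => (x : ℂ) + (k : ℂ)) 1 x := by
      simpa using (Complex.ofRealCLM.hasDerivAt (x := x)).add_const (k : ℂ)
    have heq : (fun x : ℝ => wA x + wB x) = fun x : ℝ => (x : ℂ) + (k : ℂ) := funext hsum
    rw [heq] at hA
    exact hA.unique hB
  have h1 := main_phi (wA := wA) (wB := wB) (sA := sA) Nφ (hwA.of_le (by simp)) (hwB.of_le (by simp)) hw1 hsA
  -- conjugated data for the Ψ side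
  have hconjCD : ∀ g : ℝ → ℂ, ContDiff ℝ ∞ g →
      ContDiff ℝ ∞ (fun x => (starRingEnd ℂ) (g x)) := by
    intro g hg
    have : (fun x => (starRingEnd ℂ) (g x)) = ⇑Complex.conjCLE ∘ g := by
      funext x; simp [Complex.conjCLE_apply]
    rw [this]
    exact Complex.conjCLE.contDiff.comp hg
  have hwA' : ContDiff ℝ ∞ (fun x => (starRingEnd ℂ) (wB x)) :=
    hconjCD wB (hwB.of_le (by simp))
  have hwB' : ContDiff ℝ ∞ (fun x => (starRingEnd ℂ) (wA x)) :=
    hconjCD wA (hwA.of_le (by simp))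
  have hdconj : ∀ (g : ℝ → ℂ) (g' : ℂ) (x : ℝ), HasDerivAt g g' x →
      HasDerivAt (fun t => (starRingEnd ℂ) (g t)) ((starRingEnd ℂ) g') x := by
    intro g g' x hg
    simpa only [starRingEnd_apply] using hg.star
  have hw1' : ∀ x : ℝ, deriv (fun x => (starRingEnd ℂ) (wB x)) x +
      deriv (fun x => (starRingEnd ℂ) (wA x)) x = 1 := by
    intro x
    rw [(hdconj wB (deriv wB x) x ((hwB.differentiable (by simp) x).hasDerivAt)).deriv,
      (hdconj wA (deriv wA x) x ((hwA.differentiable (by simp) x).hasDerivAt)).deriv,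
      ← map_add]
    rw [add_comm, hw1 x, map_one]
  have hsB' : ∀ x : ℝ, HasDerivAt (fun t => (starRingEnd ℂ) (sB t))
      ((starRingEnd ℂ) (wB x)) x := fun x => hdconj sB (wB x) x (hsB x)
  have h2 := main_phi (wA := fun x => (starRingEnd ℂ) (wB x))
    (wB := fun x => (starRingEnd ℂ) (wA x))
    (sA := fun t => (starRingEnd ℂ) (sB t)) NΨ hwA' hwB' hw1' hsB'
  exact ⟨h1.1, h2.1, h1.2, h2.2⟩

end
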